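/- arXiv:2008.05633 — 3 statements merged into one kernel-verified Lean document; each statement's English description precedes it below -/
import Mathlib

section
/- Let k be an odd positive integer. There exists a constant C depending only on k such that for all real λ, ρ, μ with λ > 0, ρ > 0 and λρ − μ² > 0: |∫_{ℝ²} x^k y^k e^{−(λx² + ρy² + 2μxy)/2} dx dy| ≤ C|μ|^k / (λρ − μ²)^{k + 1/2} if μ²/(λρ − μ²) ≥ 1, and |∫_{ℝ²} x^k y^k e^{−(λx² + ρy² + 2μxy)/2} dx dy| ≤ C|μ| / (λρ − μ²)^{k/2 + 1} if μ²/(λρ − μ²) < 1. -/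
/-!
Completing the square, `λx² + ρy² + 2μxy = (D/ρ)x² + ρ(y + μx/ρ)²` with `D = λρ - μ²`, so by
Fubini the integral is `∫ x^k e^{-Dx²/(2ρ)} J(μx/ρ) dx` with `J(t) = ∫ y^k e^{-ρ(y+t)²/2} dy`.
Since `k` is odd, `J(0) = 0`, and `|(z - t)^k - z^k| ≲ |t| |z|^{k-1} + |t|^k` bounds `|J(t)|` by
`|t| + |t|^k` times Gaussian absolute moments. Integrating in `x` and rescaling the moments gives
`C (|μ| / √D^{k+2} + |μ|^k / √D^{2k+1})`, and which term dominates depends on whether `|μ| ≥ √D`.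
-/

open MeasureTheory Real

noncomputable def gaussianAbsMoment (n : ℕ) (b : ℝ) : ℝ :=
  ∫ x : ℝ, |x| ^ n * exp (-(b * x ^ 2) / 2)

section GaussianMoments

variable {b : ℝ}

lemma integrable_pow_mul_exp_neg_mul_sq_div_two (hb : 0 < b) (n : ℕ) :
    Integrable fun x : ℝ => x ^ n * exp (-(b * x ^ 2) / 2) := by
  convert integrable_rpow_mul_exp_neg_mul_sq (half_pos hb) (s := n)
    (neg_one_lt_zero.trans_le n.cast_nonneg) using 3 with x
  · exact (rpow_natCast x n).symm
  · ring_nf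

lemma integrable_abs_pow_mul_exp_neg_mul_sq_div_two (hb : 0 < b) (n : ℕ) :
    Integrable fun x : ℝ => |x| ^ n * exp (-(b * x ^ 2) / 2) := by
  convert (integrable_pow_mul_exp_neg_mul_sq_div_two hb n).abs using 2 with x
  rw [abs_mul, abs_pow, abs_of_pos (exp_pos _)]

lemma gaussianAbsMoment_nonneg (n : ℕ) (b : ℝ) : 0 ≤ gaussianAbsMoment n b :=
  integral_nonneg fun _ => by positivity

lemma gaussianAbsMoment_sq_mul {a : ℝ} (ha : 0 < a) (n : ℕ) :
    gaussianAbsMoment n (a ^ 2) = gaussianAbsMoment n 1 / a ^ (n + 1) := by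
  have h := Measure.integral_comp_mul_left (fun y : ℝ => |y| ^ n * exp (-(1 * y ^ 2) / 2)) a
  have hscale : ∀ x : ℝ, |a * x| ^ n * exp (-(1 * (a * x) ^ 2) / 2)
      = a ^ n * (|x| ^ n * exp (-(a ^ 2 * x ^ 2) / 2)) := fun x => by
    rw [abs_mul, abs_of_pos ha]; ring_nf
  simp only [hscale, integral_const_mul, abs_inv, abs_of_pos ha, smul_eq_mul] at h
  rw [eq_inv_mul_iff_mul_eq₀ ha.ne'] at h
  rw [gaussianAbsMoment, gaussianAbsMoment, eq_div_iff (by positivity)]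
  linear_combination h

lemma integral_pow_mul_exp_neg_mul_sq_div_two_of_odd {k : ℕ} (hk : Odd k) (b : ℝ) :
    ∫ x : ℝ, x ^ k * exp (-(b * x ^ 2) / 2) = 0 := by
  have h := integral_neg_eq_self (fun x : ℝ => x ^ k * exp (-(b * x ^ 2) / 2)) volume
  simp only [hk.neg_pow, neg_sq, neg_mul, integral_neg] at h
  linarith

end GaussianMoments

lemma abs_sub_pow_succ_sub_pow_succ_le (n : ℕ) (z t : ℝ) :
    |(z - t) ^ (n + 1) - z ^ (n + 1)|
      ≤ (n + 1) * 2 ^ (n - 1) * (|t| * |z| ^ n + |t| ^ (n + 1)) := by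
  have h := abs_pow_sub_pow_le (z - t) z (n + 1)
  rw [Nat.add_sub_cancel, sub_sub_cancel_left, abs_neg, Nat.cast_succ] at h
  have hmax : max |z - t| |z| ≤ |z| + |t| :=
    max_le (abs_sub _ _) (le_add_of_nonneg_right (abs_nonneg t))
  calc |(z - t) ^ (n + 1) - z ^ (n + 1)|
      ≤ |t| * (n + 1) * (|z| + |t|) ^ n := h.trans (by gcongr)
    _ ≤ |t| * (n + 1) * (2 ^ (n - 1) * (|z| ^ n + |t| ^ n)) := by
        gcongr; exact add_pow_le (abs_nonneg z) (abs_nonneg t) n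
    _ = (n + 1) * 2 ^ (n - 1) * (|t| * |z| ^ n + |t| ^ (n + 1)) := by ring

lemma abs_integral_pow_mul_exp_neg_mul_add_sq_le {b : ℝ} (hb : 0 < b) {n : ℕ}
    (hn : Odd (n + 1)) (t : ℝ) :
    |∫ y : ℝ, y ^ (n + 1) * exp (-(b * (y + t) ^ 2) / 2)|
      ≤ (n + 1) * 2 ^ (n - 1) *
        (|t| * gaussianAbsMoment n b + |t| ^ (n + 1) * gaussianAbsMoment 0 b) := by
  set K : ℝ := (n + 1) * 2 ^ (n - 1)
  set e : ℝ → ℝ := fun z => exp (-(b * z ^ 2) / 2) with he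
  have hmaj : Integrable fun z =>
      K * |t| * (|z| ^ n * e z) + K * |t| ^ (n + 1) * (|z| ^ 0 * e z) :=
    ((integrable_abs_pow_mul_exp_neg_mul_sq_div_two hb n).const_mul _).add
      ((integrable_abs_pow_mul_exp_neg_mul_sq_div_two hb 0).const_mul _)
  have hle : ∀ z, ‖((z - t) ^ (n + 1) - z ^ (n + 1)) * e z‖
      ≤ K * |t| * (|z| ^ n * e z) + K * |t| ^ (n + 1) * (|z| ^ 0 * e z) := fun z => by
    rw [norm_mul, norm_eq_abs, norm_eq_abs, abs_of_pos (exp_pos _)]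
    calc _ ≤ K * (|t| * |z| ^ n + |t| ^ (n + 1)) * e z := by
          gcongr; exact abs_sub_pow_succ_sub_pow_succ_le n z t
      _ = _ := by ring
  have hdiff : Integrable fun z => ((z - t) ^ (n + 1) - z ^ (n + 1)) * e z :=
    hmaj.mono' (by fun_prop) (ae_of_all _ hle)
  have hshift : ∫ y, y ^ (n + 1) * e (y + t) = ∫ z, ((z - t) ^ (n + 1) - z ^ (n + 1)) * e z :=
    calc ∫ y, y ^ (n + 1) * e (y + t) = ∫ z, (z - t) ^ (n + 1) * e z := by
          simpa using integral_add_right_eq_self (fun z => (z - t) ^ (n + 1) * e z) t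
      _ = ∫ z, (((z - t) ^ (n + 1) - z ^ (n + 1)) * e z + z ^ (n + 1) * e z) := by
          congr 1; ext z; ring
      _ = _ := by
          rw [integral_add hdiff (integrable_pow_mul_exp_neg_mul_sq_div_two hb _), he,
            integral_pow_mul_exp_neg_mul_sq_div_two_of_odd hn, add_zero]
  rw [hshift, ← norm_eq_abs]
  refine (norm_integral_le_of_norm_le hmaj (ae_of_all _ hle)).trans_eq ?_
  rw [integral_add ((integrable_abs_pow_mul_exp_neg_mul_sq_div_two hb n).const_mul _)
    ((integrable_abs_pow_mul_exp_neg_mul_sq_div_two hb 0).const_mul _),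
    integral_const_mul, integral_const_mul, gaussianAbsMoment, gaussianAbsMoment]
  ring

section QuadraticForm

variable {lam rho mu : ℝ}

lemma quadForm_eq_add_sq (hrho : rho ≠ 0) (x y : ℝ) :
    lam * x ^ 2 + rho * y ^ 2 + 2 * mu * x * y
      = (lam * rho - mu ^ 2) / rho * x ^ 2 + rho * (y + mu / rho * x) ^ 2 := by
  field_simp
  ring

lemma mul_add_sq_le_quadForm (hlam : 0 < lam) (hrho : 0 < rho) (x y : ℝ) :
    (lam * rho - mu ^ 2) / (lam + rho) * (x ^ 2 + y ^ 2)
      ≤ lam * x ^ 2 + rho * y ^ 2 + 2 * mu * x * y := by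
  rw [div_mul_eq_mul_div, div_le_iff₀ (by positivity)]
  nlinarith [sq_nonneg (lam * x + mu * y), sq_nonneg (mu * x + rho * y)]

lemma integrable_pow_mul_pow_mul_exp_neg_quadForm (hlam : 0 < lam) (hrho : 0 < rho)
    (hD : 0 < lam * rho - mu ^ 2) (j k : ℕ) :
    Integrable fun p : ℝ × ℝ =>
      p.1 ^ j * p.2 ^ k * exp (-(lam * p.1 ^ 2 + rho * p.2 ^ 2 + 2 * mu * p.1 * p.2) / 2) := by
  set ε := (lam * rho - mu ^ 2) / (lam + rho)
  have hε : 0 < ε := by positivity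
  have hmaj : Integrable (fun p : ℝ × ℝ =>
      (|p.1| ^ j * exp (-(ε * p.1 ^ 2) / 2)) * (|p.2| ^ k * exp (-(ε * p.2 ^ 2) / 2))) :=
    (integrable_abs_pow_mul_exp_neg_mul_sq_div_two hε j).mul_prod
      (integrable_abs_pow_mul_exp_neg_mul_sq_div_two hε k)
  refine hmaj.mono' (by fun_prop) (ae_of_all _ fun p => ?_)
  have hexp : exp (-(lam * p.1 ^ 2 + rho * p.2 ^ 2 + 2 * mu * p.1 * p.2) / 2)
      ≤ exp (-(ε * p.1 ^ 2) / 2) * exp (-(ε * p.2 ^ 2) / 2) := by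
    rw [← exp_add, exp_le_exp]
    linarith [mul_add_sq_le_quadForm (mu := mu) hlam hrho p.1 p.2]
  rw [norm_mul, norm_mul, norm_pow, norm_pow, norm_eq_abs, norm_eq_abs, norm_eq_abs,
    abs_of_pos (exp_pos _)]
  calc _ ≤ |p.1| ^ j * |p.2| ^ k * (exp (-(ε * p.1 ^ 2) / 2) * exp (-(ε * p.2 ^ 2) / 2)) := by
        gcongr
    _ = _ := by ring

lemma integral_pow_mul_pow_mul_exp_neg_quadForm (hlam : 0 < lam) (hrho : 0 < rho)
    (hD : 0 < lam * rho - mu ^ 2) (j k : ℕ) :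
    ∫ p : ℝ × ℝ,
        p.1 ^ j * p.2 ^ k * exp (-(lam * p.1 ^ 2 + rho * p.2 ^ 2 + 2 * mu * p.1 * p.2) / 2)
      = ∫ x : ℝ, x ^ j * exp (-((lam * rho - mu ^ 2) / rho * x ^ 2) / 2) *
          ∫ y : ℝ, y ^ k * exp (-(rho * (y + mu / rho * x) ^ 2) / 2) := by
  rw [Measure.volume_eq_prod,
    integral_prod _ (integrable_pow_mul_pow_mul_exp_neg_quadForm hlam hrho hD j k)]
  refine integral_congr_ae (ae_of_all _ fun x => ?_)
  simp only [quadForm_eq_add_sq hrho.ne', ← integral_const_mul]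
  congr 1; ext y
  rw [neg_add, add_div, exp_add]
  ring

lemma abs_integral_pow_mul_pow_mul_exp_neg_quadForm_le_moments (hlam : 0 < lam)
    (hrho : 0 < rho) (hD : 0 < lam * rho - mu ^ 2) {n : ℕ} (hn : Odd (n + 1)) :
    |∫ p : ℝ × ℝ, p.1 ^ (n + 1) * p.2 ^ (n + 1) *
        exp (-(lam * p.1 ^ 2 + rho * p.2 ^ 2 + 2 * mu * p.1 * p.2) / 2)|
      ≤ (n + 1) * 2 ^ (n - 1) *
        (|mu / rho| * gaussianAbsMoment n rho *
            gaussianAbsMoment (n + 2) ((lam * rho - mu ^ 2) / rho)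
          + |mu / rho| ^ (n + 1) * gaussianAbsMoment 0 rho *
            gaussianAbsMoment (2 * n + 2) ((lam * rho - mu ^ 2) / rho)) := by
  set K : ℝ := (n + 1) * 2 ^ (n - 1)
  set c := mu / rho
  set b := (lam * rho - mu ^ 2) / rho
  have hb : 0 < b := div_pos hD hrho
  set e : ℝ → ℝ := fun x => exp (-(b * x ^ 2) / 2)
  have hM : ∀ m, ∫ x, |x| ^ m * e x = gaussianAbsMoment m b := fun m => rfl
  have hmaj : Integrable fun x => K * |c| * gaussianAbsMoment n rho * (|x| ^ (n + 2) * e x)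
      + K * |c| ^ (n + 1) * gaussianAbsMoment 0 rho * (|x| ^ (2 * n + 2) * e x) :=
    ((integrable_abs_pow_mul_exp_neg_mul_sq_div_two hb _).const_mul _).add
      ((integrable_abs_pow_mul_exp_neg_mul_sq_div_two hb _).const_mul _)
  rw [integral_pow_mul_pow_mul_exp_neg_quadForm hlam hrho hD, ← norm_eq_abs]
  refine (norm_integral_le_of_norm_le hmaj (ae_of_all _ fun x => ?_)).trans_eq ?_
  · rw [norm_mul, norm_mul, norm_pow, norm_eq_abs, norm_eq_abs, norm_eq_abs,
      abs_of_pos (exp_pos _)]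
    calc _ ≤ |x| ^ (n + 1) * e x * (K * (|c * x| * gaussianAbsMoment n rho
          + |c * x| ^ (n + 1) * gaussianAbsMoment 0 rho)) := by
          gcongr; exact abs_integral_pow_mul_exp_neg_mul_add_sq_le hrho hn (c * x)
      _ = _ := by rw [abs_mul, mul_pow]; ring
  · rw [integral_add ((integrable_abs_pow_mul_exp_neg_mul_sq_div_two hb _).const_mul _)
      ((integrable_abs_pow_mul_exp_neg_mul_sq_div_two hb _).const_mul _),
      integral_const_mul, integral_const_mul, hM, hM]
    ring

lemma abs_integral_pow_mul_pow_mul_exp_neg_quadForm_le (hlam : 0 < lam)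
    (hrho : 0 < rho) (hD : 0 < lam * rho - mu ^ 2) {n : ℕ} (hn : Odd (n + 1)) :
    |∫ p : ℝ × ℝ, p.1 ^ (n + 1) * p.2 ^ (n + 1) *
        exp (-(lam * p.1 ^ 2 + rho * p.2 ^ 2 + 2 * mu * p.1 * p.2) / 2)|
      ≤ (n + 1) * 2 ^ (n - 1) *
        (gaussianAbsMoment n 1 * gaussianAbsMoment (n + 2) 1
          + gaussianAbsMoment 0 1 * gaussianAbsMoment (2 * n + 2) 1
            * (|mu| / √(lam * rho - mu ^ 2)) ^ n)
        * (|mu| / √(lam * rho - mu ^ 2) ^ (n + 3)) := by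
  set s := √(lam * rho - mu ^ 2)
  set a := √rho
  have hs : 0 < s := sqrt_pos.2 hD
  have ha : 0 < a := sqrt_pos.2 hrho
  have hrho_eq : rho = a ^ 2 := (sq_sqrt hrho.le).symm
  have hb_eq : (lam * rho - mu ^ 2) / rho = (s / a) ^ 2 := by
    rw [div_pow, sq_sqrt hD.le, sq_sqrt hrho.le]
  refine (abs_integral_pow_mul_pow_mul_exp_neg_quadForm_le_moments hlam hrho hD hn).trans_eq ?_
  rw [hb_eq, gaussianAbsMoment_sq_mul (div_pos hs ha), gaussianAbsMoment_sq_mul (div_pos hs ha),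
    hrho_eq, gaussianAbsMoment_sq_mul ha, gaussianAbsMoment_sq_mul ha, abs_div,
    abs_of_pos (pow_pos ha 2)]
  simp only [div_pow, zero_add, pow_one]
  field_simp
  ring

end QuadraticForm

theorem gaussian_double_integral_odd_general (k : ℕ) (hk : Odd k) :
    ∃ C : ℝ, ∀ lam rho mu : ℝ, 0 < lam → 0 < rho → 0 < lam * rho - mu ^ 2 →
      (1 ≤ mu ^ 2 / (lam * rho - mu ^ 2) →
        |∫ p : ℝ × ℝ, p.1 ^ k * p.2 ^ k *
            Real.exp (-(lam * p.1 ^ 2 + rho * p.2 ^ 2 + 2 * mu * p.1 * p.2) / 2)|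
          ≤ C * |mu| ^ k / (lam * rho - mu ^ 2) ^ ((k : ℝ) + 1 / 2)) ∧
      (mu ^ 2 / (lam * rho - mu ^ 2) < 1 →
        |∫ p : ℝ × ℝ, p.1 ^ k * p.2 ^ k *
            Real.exp (-(lam * p.1 ^ 2 + rho * p.2 ^ 2 + 2 * mu * p.1 * p.2) / 2)|
          ≤ C * |mu| / (lam * rho - mu ^ 2) ^ ((k : ℝ) / 2 + 1)) := by
  obtain ⟨n, rfl⟩ : ∃ n, k = n + 1 := Nat.exists_eq_add_one.2 hk.pos
  set A := gaussianAbsMoment n 1 * gaussianAbsMoment (n + 2) 1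
  set B := gaussianAbsMoment 0 1 * gaussianAbsMoment (2 * n + 2) 1
  set K : ℝ := (n + 1) * 2 ^ (n - 1)
  have hA : 0 ≤ A := mul_nonneg (gaussianAbsMoment_nonneg _ _) (gaussianAbsMoment_nonneg _ _)
  have hB : 0 ≤ B := mul_nonneg (gaussianAbsMoment_nonneg _ _) (gaussianAbsMoment_nonneg _ _)
  refine ⟨K * (A + B), fun lam rho mu hlam hrho hD => ?_⟩
  have hbound := abs_integral_pow_mul_pow_mul_exp_neg_quadForm_le (mu := mu) hlam hrho hD hk
  set s := √(lam * rho - mu ^ 2)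
  have hs : 0 < s := sqrt_pos.2 hD
  set r := |mu| / s
  have hr : r ^ 2 = mu ^ 2 / (lam * rho - mu ^ 2) := by rw [div_pow, sq_abs, sq_sqrt hD.le]
  have hpow (m : ℕ) : (lam * rho - mu ^ 2) ^ ((m : ℝ) / 2) = s ^ m := by
    rw [rpow_div_two_eq_sqrt _ hD.le, rpow_natCast]
  rw [show ((n + 1 : ℕ) : ℝ) + 1 / 2 = ((2 * n + 3 : ℕ) : ℝ) / 2 by push_cast; ring,
    show ((n + 1 : ℕ) : ℝ) / 2 + 1 = ((n + 3 : ℕ) : ℝ) / 2 by push_cast; ring, hpow, hpow, ← hr]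
  constructor
  · intro hcase
    have hrn : 1 ≤ r ^ n := one_le_pow₀ ((one_le_sq_iff₀ (by positivity)).1 hcase)
    calc _ ≤ K * (A + B * r ^ n) * (|mu| / s ^ (n + 3)) := hbound
      _ ≤ K * ((A + B) * r ^ n) * (|mu| / s ^ (n + 3)) := by
          gcongr; linarith [le_mul_of_one_le_right hA hrn]
      _ = K * (A + B) * |mu| ^ (n + 1) / s ^ (2 * n + 3) := by
          simp only [r, div_pow]; field_simp; ring
  · intro hcase
    have hrn : r ^ n ≤ 1 :=
      pow_le_one₀ (by positivity) ((sq_lt_one_iff₀ (by positivity)).1 hcase).le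
    calc _ ≤ K * (A + B * r ^ n) * (|mu| / s ^ (n + 3)) := hbound
      _ ≤ K * (A + B) * (|mu| / s ^ (n + 3)) := by
          gcongr; exact mul_le_of_le_one_right hB hrn
      _ = K * (A + B) * |mu| / s ^ (n + 3) := mul_div_assoc .. |>.symm

/-- **Lemma 2.1 (i).** Bounds for the Gaussian-type double integral
`∫_{ℝ²} x^k y^k e^{−(λx² + ρy² + 2μxy)/2} dx dy` when `k` is odd, for a positive
definite quadratic form (`λ > 0`, `ρ > 0`, `λρ − μ² > 0`). -/
theorem gaussian_double_integral_odd (k : ℕ) (hk0 : 0 < k) (hk : Odd k) :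
    ∃ C : ℝ, ∀ lam rho mu : ℝ, 0 < lam → 0 < rho → 0 < lam * rho - mu ^ 2 →
      (1 ≤ mu ^ 2 / (lam * rho - mu ^ 2) →
        |∫ p : ℝ × ℝ, p.1 ^ k * p.2 ^ k *
            Real.exp (-(lam * p.1 ^ 2 + rho * p.2 ^ 2 + 2 * mu * p.1 * p.2) / 2)|
          ≤ C * |mu| ^ k / (lam * rho - mu ^ 2) ^ ((k : ℝ) + 1 / 2)) ∧
      (mu ^ 2 / (lam * rho - mu ^ 2) < 1 →
        |∫ p : ℝ × ℝ, p.1 ^ k * p.2 ^ k *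
            Real.exp (-(lam * p.1 ^ 2 + rho * p.2 ^ 2 + 2 * mu * p.1 * p.2) / 2)|
          ≤ C * |mu| / (lam * rho - mu ^ 2) ^ ((k : ℝ) / 2 + 1)) :=
  gaussian_double_integral_odd_general k hk
end

section
/- Fix H ∈ (0,1). There exists a constant K₃ > 0 depending only on H such that for all 0 ≤ r < s < r' < s', writing a = s − r, b = r' − s, c = s' − r', λ = (s−r)^{2H}, ρ = (s'−r')^{2H} and μ = (1/2)(|s'−r|^{2H} + |s−r'|^{2H} − |s'−s|^{2H} − |r−r'|^{2H}), one has λρ − μ² ≥ K₃ (ac)^{2H}, and moreover 2μ = (a+b+c)^{2H} + b^{2H} − (a+b)^{2H} − (c+b)^{2H}. -/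
/-!
With `p = 2H` and `Δ = 2μ = (a+b+c)^p + b^p - (a+b)^p - (c+b)^p` we have
`λρ - μ² = a^p c^p - Δ²/4`. It suffices to show `Δ² ≤ max 1 (p²) a^p c^p`,
since `max 1 (p²) < 4`. By the mean value theorem `Δ = p ((ξ+a)^{p-1} - ξ^{p-1}) c` for some `ξ > 0`.
If `p ≤ 1` this gives `Δ ≤ 0`, while subadditivity and monotonicity of `x ↦ x^p` give
`-Δ ≤ a^p` and `-Δ ≤ c^p`. If `1 ≤ p ≤ 2`, subadditivity of `x ↦ x^{p-1}` gives
`0 ≤ Δ ≤ p a^{p-1} c`, and by the symmetry `a ↔ c` also `Δ ≤ p c^{p-1} a`.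
-/

open Real Set

/-- Twice the covariance of fBm increments of lengths `a` and `c` separated by a gap `b`,
with `p = 2H`; it is the mixed second difference `Δ_a Δ_c (x ↦ x^p)` at `b`. -/
noncomputable def mixedDiff (p a b c : ℝ) : ℝ :=
  (a + b + c) ^ p + b ^ p - (a + b) ^ p - (c + b) ^ p

section mixedDiff

variable {p a b c : ℝ}

lemma mixedDiff_comm (p a b c : ℝ) : mixedDiff p a b c = mixedDiff p c b a := by
  rw [mixedDiff, mixedDiff, show c + b + a = a + b + c by ring]
  ring

lemma exists_mixedDiff_eq (ha : 0 ≤ a) (hb : 0 < b) (hc : 0 < c) :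
    ∃ ξ ∈ Ioo b (b + c), mixedDiff p a b c = p * ((ξ + a) ^ (p - 1) - ξ ^ (p - 1)) * c := by
  have hderiv : ∀ x, 0 < x → HasDerivAt (fun x => (x + a) ^ p - x ^ p)
      (p * ((x + a) ^ (p - 1) - x ^ (p - 1))) x := by
    intro x hx
    have hxa := ((hasDerivAt_id' x).add_const a).rpow_const (p := p) (Or.inl (by positivity))
    exact (hxa.sub (hasDerivAt_rpow_const (Or.inl hx.ne'))).congr_deriv (by ring)
  obtain ⟨ξ, hξ, hslope⟩ := exists_hasDerivAt_eq_slope _ _ (by linarith : b < b + c)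
    (fun x hx => (hderiv x (hb.trans_le hx.1)).continuousAt.continuousWithinAt)
    (fun x hx => hderiv x (hb.trans hx.1))
  refine ⟨ξ, hξ, ?_⟩
  rw [hslope, add_sub_cancel_left, div_mul_cancel₀ _ hc.ne', mixedDiff]
  ring_nf

lemma mixedDiff_nonpos (hp0 : 0 ≤ p) (hp1 : p ≤ 1) (ha : 0 ≤ a) (hb : 0 < b) (hc : 0 < c) :
    mixedDiff p a b c ≤ 0 := by
  obtain ⟨ξ, hξ, hD⟩ := exists_mixedDiff_eq (p := p) ha hb hc
  have hξ0 : 0 < ξ := hb.trans hξ.1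
  have : (ξ + a) ^ (p - 1) ≤ ξ ^ (p - 1) :=
    rpow_le_rpow_of_nonpos hξ0 (by linarith) (by linarith)
  rw [hD]
  exact mul_nonpos_of_nonpos_of_nonneg
    (mul_nonpos_of_nonneg_of_nonpos hp0 (by linarith)) hc.le

lemma neg_mixedDiff_le (hp0 : 0 ≤ p) (hp1 : p ≤ 1) (ha : 0 ≤ a) (hb : 0 ≤ b) (hc : 0 ≤ c) :
    -mixedDiff p a b c ≤ a ^ p := by
  have hsub : (a + b) ^ p ≤ a ^ p + b ^ p := rpow_add_le_add_rpow ha hb hp0 hp1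
  have hmono : (c + b) ^ p ≤ (a + b + c) ^ p := rpow_le_rpow (by positivity) (by linarith) hp0
  unfold mixedDiff
  linarith

lemma mixedDiff_nonneg (hp1 : 1 ≤ p) (ha : 0 ≤ a) (hb : 0 < b) (hc : 0 < c) :
    0 ≤ mixedDiff p a b c := by
  obtain ⟨ξ, hξ, hD⟩ := exists_mixedDiff_eq (p := p) ha hb hc
  have : ξ ^ (p - 1) ≤ (ξ + a) ^ (p - 1) :=
    rpow_le_rpow (hb.trans hξ.1).le (by linarith) (by linarith)
  rw [hD]
  exact mul_nonneg (mul_nonneg (by linarith) (by linarith)) hc.le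

lemma mixedDiff_le (hp1 : 1 ≤ p) (hp2 : p ≤ 2) (ha : 0 < a) (hb : 0 < b) (hc : 0 < c) :
    mixedDiff p a b c ≤ p * a ^ (p - 1) * c := by
  obtain ⟨ξ, hξ, hD⟩ := exists_mixedDiff_eq (p := p) ha.le hb hc
  have : (ξ + a) ^ (p - 1) ≤ ξ ^ (p - 1) + a ^ (p - 1) :=
    rpow_add_le_add_rpow (hb.trans hξ.1).le ha.le (by linarith) (by linarith)
  rw [hD]
  gcongr
  linarith

lemma sq_mixedDiff_le_of_le_one (hp0 : 0 ≤ p) (hp1 : p ≤ 1)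
    (ha : 0 < a) (hb : 0 < b) (hc : 0 < c) :
    mixedDiff p a b c ^ 2 ≤ a ^ p * c ^ p := by
  have hD := mixedDiff_nonpos hp0 hp1 ha.le hb hc
  have hDa := neg_mixedDiff_le hp0 hp1 ha.le hb.le hc.le
  have hDc := neg_mixedDiff_le hp0 hp1 hc.le hb.le ha.le
  rw [← mixedDiff_comm] at hDc
  calc mixedDiff p a b c ^ 2 = -mixedDiff p a b c * -mixedDiff p a b c := by ring
    _ ≤ a ^ p * c ^ p := mul_le_mul hDa hDc (by linarith) (by positivity)

lemma sq_mixedDiff_le_of_one_le (hp1 : 1 ≤ p) (hp2 : p ≤ 2)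
    (ha : 0 < a) (hb : 0 < b) (hc : 0 < c) :
    mixedDiff p a b c ^ 2 ≤ p ^ 2 * (a ^ p * c ^ p) := by
  have hD := mixedDiff_nonneg hp1 ha.le hb hc
  have hDa := mixedDiff_le hp1 hp2 ha hb hc
  have hDc := mixedDiff_le hp1 hp2 hc hb ha
  rw [← mixedDiff_comm] at hDc
  calc mixedDiff p a b c ^ 2 = mixedDiff p a b c * mixedDiff p a b c := sq _
    _ ≤ (p * a ^ (p - 1) * c) * (p * c ^ (p - 1) * a) := mul_le_mul hDa hDc hD (by linarith)
    _ = p ^ 2 * ((a ^ (p - 1) * a) * (c ^ (p - 1) * c)) := by ring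
    _ = p ^ 2 * (a ^ p * c ^ p) := by
      rw [← rpow_add_one ha.ne', ← rpow_add_one hc.ne', sub_add_cancel]

lemma sq_mixedDiff_le (hp0 : 0 ≤ p) (hp2 : p ≤ 2) (ha : 0 < a) (hb : 0 < b) (hc : 0 < c) :
    mixedDiff p a b c ^ 2 ≤ max 1 (p ^ 2) * (a ^ p * c ^ p) := by
  have hac : 0 ≤ a ^ p * c ^ p := by positivity
  rcases le_total p 1 with hp1 | hp1
  · calc mixedDiff p a b c ^ 2 ≤ 1 * (a ^ p * c ^ p) := by
          rw [one_mul]; exact sq_mixedDiff_le_of_le_one hp0 hp1 ha hb hc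
      _ ≤ _ := by gcongr; exact le_max_left _ _
  · calc mixedDiff p a b c ^ 2 ≤ p ^ 2 * (a ^ p * c ^ p) := sq_mixedDiff_le_of_one_le hp1 hp2 ha hb hc
      _ ≤ _ := by gcongr; exact le_max_right _ _

end mixedDiff

/-- **Lemma 2.2, Case (iii).** For `0 ≤ r < s < r' < s'`, with `a = s−r`, `b = r'−s`,
`c = s'−r'`, `λ = (s−r)^{2H}`, `ρ = (s'−r')^{2H}` and
`μ = (1/2)(|s'−r|^{2H} + |s−r'|^{2H} − |s'−s|^{2H} − |r−r'|^{2H})`, one has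
`λρ − μ² ≥ K₃ (ac)^{2H}` for a constant `K₃ > 0` depending only on `H`,
and `2μ = (a+b+c)^{2H} + b^{2H} − (a+b)^{2H} − (c+b)^{2H}`. -/
theorem var_cov_bound_case3 (H : ℝ) (hH0 : 0 < H) (hH1 : H < 1) :
    ∃ K₃ : ℝ, 0 < K₃ ∧ ∀ r s r' s' : ℝ, 0 ≤ r → r < s → s < r' → r' < s' →
      ((s - r) ^ (2 * H) * (s' - r') ^ (2 * H)
          - ((1 / 2) * (|s' - r| ^ (2 * H) + |s - r'| ^ (2 * H)
              - |s' - s| ^ (2 * H) - |r - r'| ^ (2 * H))) ^ 2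
        ≥ K₃ * ((s - r) * (s' - r')) ^ (2 * H))
      ∧ 2 * ((1 / 2) * (|s' - r| ^ (2 * H) + |s - r'| ^ (2 * H)
              - |s' - s| ^ (2 * H) - |r - r'| ^ (2 * H)))
        = ((s - r) + (r' - s) + (s' - r')) ^ (2 * H) + (r' - s) ^ (2 * H)
            - ((s - r) + (r' - s)) ^ (2 * H) - ((s' - r') + (r' - s)) ^ (2 * H) := by
  refine ⟨1 - max 1 ((2 * H) ^ 2) / 4, ?_, ?_⟩
  · have : max 1 ((2 * H) ^ 2) < 4 := max_lt (by norm_num) (by nlinarith)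
    linarith
  intro r s r' s' _ hrs hsr' hr's
  have h2μ : |s' - r| ^ (2 * H) + |s - r'| ^ (2 * H) - |s' - s| ^ (2 * H) - |r - r'| ^ (2 * H)
      = mixedDiff (2 * H) (s - r) (r' - s) (s' - r') := by
    rw [abs_of_pos (by linarith), abs_of_neg (by linarith), abs_of_pos (by linarith),
      abs_of_neg (by linarith), mixedDiff]
    ring_nf
  have hΔ := sq_mixedDiff_le (p := 2 * H) (by linarith) (by linarith)
    (sub_pos.2 hrs) (sub_pos.2 hsr') (sub_pos.2 hr's)
  rw [h2μ, mul_rpow (sub_pos.2 hrs).le (sub_pos.2 hr's).le]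
  exact ⟨by linarith, by rw [mixedDiff]; ring⟩
end

section
/- There exists a universal constant C > 0 such that for all ε > 0 and all a, b, c ≥ 0, writing μ = (1/2)((a+b+c)^{4/3} + b^{4/3} − a^{4/3} − c^{4/3}), one has (ε + (a+b)^{4/3})(ε + (b+c)^{4/3}) − μ² ≥ C (a+b)^{2/3} (b+c)^{2/3} (ε + (ac)^{2/3}). -/
/-!
In the cube-root coordinates `α, β, γ, P, Q, S` of `a, b, c, a + b, b + c, a + b + c` all the
powers become polynomial, and by symmetry we may assume `c ≤ a`. Write `2μ` as
`(S⁴ + β⁴ - P⁴ - Q⁴) + (P⁴ + Q⁴ - α⁴ - γ⁴)`. Concavity of `x ↦ x^{2/3}` gives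
`P² - Q² ≤ α² - γ²`, so the second bracket is at most `2P²Q² - 2α²γ²`. Tangent-line bounds for the
convex `x ↦ x^{4/3}` bound the first bracket by `(4/3) c (S - β) ≤ (16/9) α²γ²`. Hence
`0 ≤ μ ≤ P²Q² - α²γ²/9`, and expanding the determinant gives the claim with `C = 1/9`.
-/

open Real

theorem rpow_natCast_div_three {x : ℝ} (hx : 0 ≤ x) (n : ℕ) :
    x ^ ((n : ℝ) / 3) = (x ^ (3⁻¹ : ℝ)) ^ n := by
  rw [← rpow_mul_natCast hx]
  ring_nf

section CubeRootCoordinates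

variable {α β γ P Q S : ℝ}

/-- The tangent-line bound for the convex function `x ↦ x^{4/3}`, in the cube-root variable. -/
theorem pow_four_sub_pow_four_le (u v : ℝ) : v ^ 4 - u ^ 4 ≤ 4 / 3 * v * (v ^ 3 - u ^ 3) := by
  nlinarith [mul_nonneg (sq_nonneg (v - u)) (sq_nonneg (v + u)),
    mul_nonneg (sq_nonneg (v - u)) (sq_nonneg u)]

/-- Increments of the concave function `x ↦ x^{2/3}` decrease, in cube-root variables. -/
theorem sq_sub_sq_le_of_pow_three_sub_eq (hγ : 0 ≤ γ) (hγα : γ ≤ α) (hαP : α ≤ P)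
    (hγQ : γ ≤ Q) (h : P ^ 3 - Q ^ 3 = α ^ 3 - γ ^ 3) : P ^ 2 - Q ^ 2 ≤ α ^ 2 - γ ^ 2 := by
  have hE : 0 ≤ (α + γ) * (P ^ 2 + P * Q + Q ^ 2) - (P + Q) * (α ^ 2 + α * γ + γ ^ 2) := by
    obtain ⟨p, hp, rfl⟩ : ∃ p ≥ 0, P = α + p := ⟨P - α, by linarith, by ring⟩
    obtain ⟨q, hq, rfl⟩ : ∃ q ≥ 0, Q = γ + q := ⟨Q - γ, by linarith, by ring⟩
    have hα : 0 ≤ α := hγ.trans hγα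
    have key : (α + γ) * ((α + p) ^ 2 + (α + p) * (γ + q) + (γ + q) ^ 2)
          - (α + p + (γ + q)) * (α ^ 2 + α * γ + γ ^ 2)
        = (p + q) * α * γ + (α + γ) * (α * p + γ * q + p ^ 2 + p * q + q ^ 2) := by ring
    rw [key]
    positivity
  have hW : ((α ^ 2 - γ ^ 2) - (P ^ 2 - Q ^ 2)) * (P ^ 2 + P * Q + Q ^ 2)
      = (α - γ) * ((α + γ) * (P ^ 2 + P * Q + Q ^ 2) - (P + Q) * (α ^ 2 + α * γ + γ ^ 2)) := by
    linear_combination -(P + Q) * h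
  have hk : 0 ≤ P ^ 2 + P * Q + Q ^ 2 := by nlinarith
  rcases hk.eq_or_lt with hk | hk
  · obtain ⟨rfl, rfl⟩ : P = 0 ∧ Q = 0 := ⟨by nlinarith, by nlinarith⟩
    nlinarith
  · exact sub_nonneg.1 (nonneg_of_mul_nonneg_left (hW ▸ mul_nonneg (sub_nonneg.2 hγα) hE) hk)

theorem pow_four_mixed_diff_le (hβ : 0 ≤ β) (hγ : 0 ≤ γ) (hγα : γ ≤ α)
    (hP : P ^ 3 = α ^ 3 + β ^ 3) (hQ : Q ^ 3 = β ^ 3 + γ ^ 3) (hS : S ^ 3 = α ^ 3 + β ^ 3 + γ ^ 3) :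
    S ^ 4 + β ^ 4 - P ^ 4 - Q ^ 4 ≤ 16 / 9 * α ^ 2 * γ ^ 2 := by
  have hα : 0 ≤ α := hγ.trans hγα
  -- `S³ ≤ 2α³ + β³` and `(4/3)³ > 2`
  have hSβ : S ≤ β + 4 / 3 * α := by
    refine le_of_pow_le_pow_left₀ three_ne_zero (by positivity) ?_
    nlinarith [pow_le_pow_left₀ hγ hγα 3, pow_nonneg hα 3, mul_nonneg (sq_nonneg β) hα,
      mul_nonneg hβ (sq_nonneg α)]
  calc S ^ 4 + β ^ 4 - P ^ 4 - Q ^ 4 = (S ^ 4 - P ^ 4) + (β ^ 4 - Q ^ 4) := by ring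
    _ ≤ 4 / 3 * S * (S ^ 3 - P ^ 3) + 4 / 3 * β * (β ^ 3 - Q ^ 3) :=
      add_le_add (pow_four_sub_pow_four_le _ _) (pow_four_sub_pow_four_le _ _)
    _ = 4 / 3 * γ ^ 3 * (S - β) := by rw [hS, hP, hQ]; ring
    _ ≤ 4 / 3 * γ ^ 3 * (4 / 3 * α) := by gcongr; linarith
    _ = 16 / 9 * γ ^ 2 * (γ * α) := by ring
    _ ≤ 16 / 9 * γ ^ 2 * (α * α) := by gcongr
    _ = 16 / 9 * α ^ 2 * γ ^ 2 := by ring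

theorem pow_four_cov_nonneg (hα : 0 ≤ α) (hβ : 0 ≤ β) (hγ : 0 ≤ γ) (hS₀ : 0 ≤ S)
    (hS : S ^ 3 = α ^ 3 + β ^ 3 + γ ^ 3) : 0 ≤ S ^ 4 + β ^ 4 - α ^ 4 - γ ^ 4 := by
  have hαS : α ≤ S :=
    le_of_pow_le_pow_left₀ three_ne_zero hS₀ (by nlinarith [pow_nonneg hβ 3, pow_nonneg hγ 3])
  have hγS : γ ≤ S :=
    le_of_pow_le_pow_left₀ three_ne_zero hS₀ (by nlinarith [pow_nonneg hα 3, pow_nonneg hβ 3])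
  have hS4 : S ^ 4 = S * α ^ 3 + S * β ^ 3 + S * γ ^ 3 := by linear_combination S * hS
  nlinarith [mul_le_mul_of_nonneg_right hαS (pow_nonneg hα 3),
    mul_le_mul_of_nonneg_right hγS (pow_nonneg hγ 3), mul_nonneg hS₀ (pow_nonneg hβ 3),
    pow_nonneg hβ 4]

theorem pow_four_cov_le (hβ : 0 ≤ β) (hγ : 0 ≤ γ) (hγα : γ ≤ α) (hαP : α ≤ P) (hγQ : γ ≤ Q)
    (hP : P ^ 3 = α ^ 3 + β ^ 3) (hQ : Q ^ 3 = β ^ 3 + γ ^ 3)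
    (hS : S ^ 3 = α ^ 3 + β ^ 3 + γ ^ 3) :
    S ^ 4 + β ^ 4 - α ^ 4 - γ ^ 4 ≤ 2 * P ^ 2 * Q ^ 2 - 2 / 9 * α ^ 2 * γ ^ 2 := by
  have hQP : Q ≤ P := le_of_pow_le_pow_left₀ three_ne_zero (hγ.trans (hγα.trans hαP))
    (by nlinarith [pow_le_pow_left₀ hγ hγα 3])
  have hinc := sq_sub_sq_le_of_pow_three_sub_eq hγ hγα hαP hγQ (by rw [hP, hQ]; ring)
  have hsq : (P ^ 2 - Q ^ 2) ^ 2 ≤ (α ^ 2 - γ ^ 2) ^ 2 :=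
    pow_le_pow_left₀ (sub_nonneg.2 (pow_le_pow_left₀ (hγ.trans hγQ) hQP 2)) hinc 2
  nlinarith [pow_four_mixed_diff_le hβ hγ hγα hP hQ hS]

theorem det_lower_bound_of_le {ε : ℝ} (hε : 0 ≤ ε) (hβ : 0 ≤ β) (hγ : 0 ≤ γ) (hγα : γ ≤ α)
    (hP₀ : 0 ≤ P) (hQ₀ : 0 ≤ Q) (hS₀ : 0 ≤ S) (hP : P ^ 3 = α ^ 3 + β ^ 3)
    (hQ : Q ^ 3 = β ^ 3 + γ ^ 3) (hS : S ^ 3 = α ^ 3 + β ^ 3 + γ ^ 3) :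
    1 / 9 * P ^ 2 * Q ^ 2 * (ε + α ^ 2 * γ ^ 2)
      ≤ (ε + P ^ 4) * (ε + Q ^ 4) - (1 / 2 * (S ^ 4 + β ^ 4 - α ^ 4 - γ ^ 4)) ^ 2 := by
  have hα : 0 ≤ α := hγ.trans hγα
  have hαP : α ≤ P := le_of_pow_le_pow_left₀ three_ne_zero hP₀ (by nlinarith [pow_nonneg hβ 3])
  have hγQ : γ ≤ Q := le_of_pow_le_pow_left₀ three_ne_zero hQ₀ (by nlinarith [pow_nonneg hβ 3])
  set T := α ^ 2 * γ ^ 2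
  set M := P ^ 2 * Q ^ 2
  have hT : 0 ≤ T := by positivity
  have hTM : T ≤ M := mul_le_mul (pow_le_pow_left₀ hα hαP 2) (pow_le_pow_left₀ hγ hγQ 2)
    (by positivity) (by positivity)
  have hμ₀ := pow_four_cov_nonneg hα hβ hγ hS₀ hS
  have hμ := pow_four_cov_le hβ hγ hγα hαP hγQ hP hQ hS
  have hμsq : (1 / 2 * (S ^ 4 + β ^ 4 - α ^ 4 - γ ^ 4)) ^ 2 ≤ (M - T / 9) ^ 2 :=
    pow_le_pow_left₀ (by linarith) (by linarith) 2
  nlinarith [mul_nonneg hε (sq_nonneg (P ^ 2 - Q ^ 2)), mul_nonneg hε (hT.trans hTM),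
    mul_nonneg hT (sub_nonneg.2 hTM), sq_nonneg ε]

theorem det_lower_bound_of_pow_three_eq {ε : ℝ} (hε : 0 ≤ ε) (hα : 0 ≤ α) (hβ : 0 ≤ β)
    (hγ : 0 ≤ γ) (hP₀ : 0 ≤ P) (hQ₀ : 0 ≤ Q) (hS₀ : 0 ≤ S) (hP : P ^ 3 = α ^ 3 + β ^ 3)
    (hQ : Q ^ 3 = β ^ 3 + γ ^ 3) (hS : S ^ 3 = α ^ 3 + β ^ 3 + γ ^ 3) :
    1 / 9 * P ^ 2 * Q ^ 2 * (ε + α ^ 2 * γ ^ 2)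
      ≤ (ε + P ^ 4) * (ε + Q ^ 4) - (1 / 2 * (S ^ 4 + β ^ 4 - α ^ 4 - γ ^ 4)) ^ 2 := by
  rcases le_total γ α with hγα | hαγ
  · exact det_lower_bound_of_le hε hβ hγ hγα hP₀ hQ₀ hS₀ hP hQ hS
  · convert det_lower_bound_of_le hε hβ hα hαγ hQ₀ hP₀ hS₀ (by linarith) (by linarith)
      (by linarith) using 1 <;> ring

end CubeRootCoordinates

/-- **Determinant lower bound** used for the `V₁` term (configuration `r < r' < s < s'`,
`H = 2/3`): there is a universal constant `C > 0` such that for all `ε > 0` and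
`a, b, c ≥ 0`, with `μ = (1/2)((a+b+c)^{4/3} + b^{4/3} − a^{4/3} − c^{4/3})`,
`(ε + (a+b)^{4/3})(ε + (b+c)^{4/3}) − μ² ≥ C (a+b)^{2/3} (b+c)^{2/3} (ε + (ac)^{2/3})`. -/
theorem det_lower_bound :
    ∃ C : ℝ, 0 < C ∧ ∀ ε : ℝ, 0 < ε → ∀ a b c : ℝ, 0 ≤ a → 0 ≤ b → 0 ≤ c →
      (ε + (a + b) ^ ((4 : ℝ) / 3)) * (ε + (b + c) ^ ((4 : ℝ) / 3))
          - ((1 / 2) * ((a + b + c) ^ ((4 : ℝ) / 3) + b ^ ((4 : ℝ) / 3)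
              - a ^ ((4 : ℝ) / 3) - c ^ ((4 : ℝ) / 3))) ^ 2
        ≥ C * (a + b) ^ ((2 : ℝ) / 3) * (b + c) ^ ((2 : ℝ) / 3)
            * (ε + (a * c) ^ ((2 : ℝ) / 3)) := by
  refine ⟨1 / 9, by norm_num, fun ε hε a b c ha hb hc => ?_⟩
  have h₄ (x : ℝ) (hx : 0 ≤ x) : x ^ ((4 : ℝ) / 3) = (x ^ (3⁻¹ : ℝ)) ^ 4 := by
    exact_mod_cast rpow_natCast_div_three hx 4
  have h₂ (x : ℝ) (hx : 0 ≤ x) : x ^ ((2 : ℝ) / 3) = (x ^ (3⁻¹ : ℝ)) ^ 2 := by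
    exact_mod_cast rpow_natCast_div_three hx 2
  have h₃ (x : ℝ) (hx : 0 ≤ x) : (x ^ (3⁻¹ : ℝ)) ^ 3 = x := by
    exact_mod_cast rpow_inv_natCast_pow hx three_ne_zero
  have hab := add_nonneg ha hb
  have hbc := add_nonneg hb hc
  have habc := add_nonneg hab hc
  rw [ge_iff_le, h₄ _ hab, h₄ _ hbc, h₄ _ habc, h₄ _ ha, h₄ _ hb, h₄ _ hc, h₂ _ hab, h₂ _ hbc,
    mul_rpow ha hc, h₂ _ ha, h₂ _ hc]
  exact det_lower_bound_of_pow_three_eq hε.le (rpow_nonneg ha _) (rpow_nonneg hb _)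
    (rpow_nonneg hc _) (rpow_nonneg hab _) (rpow_nonneg hbc _) (rpow_nonneg habc _)
    (by rw [h₃ _ hab, h₃ _ ha, h₃ _ hb]) (by rw [h₃ _ hbc, h₃ _ hb, h₃ _ hc])
    (by rw [h₃ _ habc, h₃ _ ha, h₃ _ hb, h₃ _ hc])
end
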